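/- arXiv:1612.09538 — 4 statements merged into one kernel-verified Lean document; each statement's English description precedes it below -/
import Mathlib

section
/- Let $\beta \in (0,1)$, $\alpha \in (0,1)$, $\omega_0 \in (0,\pi/2)$, and $\tau, \theta_0 > 0$ with $(1+\beta+\tau)\omega_0 + \theta_0 < \pi/2$. Writing $\bar\theta = (1+\beta+\tau)\theta + \theta_0$, the function $v_2(r,\theta) = r^{-1-\beta}(C_3\sin\bar\theta + C_4(\sin\theta)^{\alpha})$ on the sector $\{0 < \theta < \omega_0\}$ satisfies $\Delta v_2 \le -c\, r^{-3-\beta}(\sin\theta)^{-2+\alpha}$ for some $c > 0$, provided the ratio $C_3/C_4 > 0$ is chosen sufficiently large. -/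
open Real Filter

lemma rad1 {r : ℝ} (hr : r ≠ 0) (p A : ℝ) :
    HasDerivAt (fun s : ℝ => s ^ p * A) (p * r ^ (p-1) * A) r :=
  (Real.hasDerivAt_rpow_const (Or.inl hr)).mul_const A

lemma rad2 {r : ℝ} (hr : 0 < r) (p A : ℝ) :
    deriv (deriv (fun s : ℝ => s ^ p * A)) r = p * (p-1) * r ^ (p-2) * A := by
  have hev : deriv (fun s : ℝ => s ^ p * A) =ᶠ[nhds r] fun s => p * s ^ (p-1) * A := by
    filter_upwards [eventually_ne_nhds hr.ne'] with s hs
    exact (rad1 hs p A).deriv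
  rw [hev.deriv_eq]
  have h := (((Real.hasDerivAt_rpow_const (p := p-1) (Or.inl hr.ne')).const_mul p).mul_const A).deriv
  rw [show p-1-1 = p-2 from by ring] at h
  rw [h]; ring

lemma ang1 (R C₃ C₄ σ θ₀ α : ℝ) {t : ℝ} (ht : 0 < Real.sin t) :
    HasDerivAt (fun t : ℝ => R * (C₃ * Real.sin (σ*t + θ₀) + C₄ * Real.sin t ^ α))
      (R * (C₃ * (Real.cos (σ*t + θ₀) * σ) + C₄ * (Real.cos t * α * Real.sin t ^ (α-1)))) t := by
  have h1 : HasDerivAt (fun s : ℝ => σ*s + θ₀) σ t := by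
    simpa using ((hasDerivAt_id t).const_mul σ).add_const θ₀
  have h2 : HasDerivAt (fun s : ℝ => Real.sin (σ*s + θ₀)) (Real.cos (σ*t + θ₀) * σ) t :=
    (Real.hasDerivAt_sin _).comp t h1
  have h3 : HasDerivAt (fun s : ℝ => Real.sin s ^ α) (Real.cos t * α * Real.sin t ^ (α-1)) t :=
    (Real.hasDerivAt_sin t).rpow_const (Or.inl ht.ne')
  exact ((h2.const_mul C₃).add (h3.const_mul C₄)).const_mul R

lemma ang2 (R C₃ C₄ σ θ₀ α : ℝ) {t : ℝ} (ht : 0 < Real.sin t) :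
    HasDerivAt (fun t : ℝ => R * (C₃ * (Real.cos (σ*t + θ₀) * σ) + C₄ * (Real.cos t * α * Real.sin t ^ (α-1))))
      (R * (C₃ * (-Real.sin (σ*t + θ₀) * σ * σ) +
        C₄ * (-Real.sin t * α * Real.sin t ^ (α-1) +
          Real.cos t * α * (Real.cos t * (α-1) * Real.sin t ^ (α-1-1))))) t := by
  have h1 : HasDerivAt (fun s : ℝ => σ*s + θ₀) σ t := by
    simpa using ((hasDerivAt_id t).const_mul σ).add_const θ₀
  have h2 : HasDerivAt (fun s : ℝ => Real.cos (σ*s + θ₀)) (-Real.sin (σ*t + θ₀) * σ) t :=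
    (Real.hasDerivAt_cos _).comp t h1
  have h3 : HasDerivAt (fun s : ℝ => Real.cos s * α) (-Real.sin t * α) t :=
    (Real.hasDerivAt_cos t).mul_const α
  have h4 : HasDerivAt (fun s : ℝ => Real.sin s ^ (α-1)) (Real.cos t * (α-1) * Real.sin t ^ (α-1-1)) t :=
    (Real.hasDerivAt_sin t).rpow_const (Or.inl ht.ne')
  exact (((h2.mul_const σ).const_mul C₃).add ((h3.mul h4).const_mul C₄)).const_mul R

lemma angd2 (R C₃ C₄ σ θ₀ α : ℝ) {θ : ℝ} (hθ : 0 < Real.sin θ) :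
    deriv (deriv (fun t : ℝ => R * (C₃ * Real.sin (σ*t + θ₀) + C₄ * Real.sin t ^ α))) θ
      = R * (C₃ * (-Real.sin (σ*θ + θ₀) * σ * σ) +
        C₄ * (-Real.sin θ * α * Real.sin θ ^ (α-1) +
          Real.cos θ * α * (Real.cos θ * (α-1) * Real.sin θ ^ (α-1-1)))) := by
  have hev : deriv (fun t : ℝ => R * (C₃ * Real.sin (σ*t + θ₀) + C₄ * Real.sin t ^ α))
      =ᶠ[nhds θ] fun t => R * (C₃ * (Real.cos (σ*t + θ₀) * σ) + C₄ * (Real.cos t * α * Real.sin t ^ (α-1))) := by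
    filter_upwards [(Real.continuous_sin.continuousAt (x := θ)).eventually (eventually_gt_nhds hθ)] with t ht
    exact (ang1 R C₃ C₄ σ θ₀ α ht).deriv
  rw [hev.deriv_eq]
  exact (ang2 R C₃ C₄ σ θ₀ α hθ).deriv

set_option maxHeartbeats 1000000 in
/-- the decay barrier `v₂ = r^{-1-β}(C₃ sin θ̄ + C₄ (sin θ)^α)` has
polar Laplacian bounded by `-c r^{-3-β} (sin θ)^{-2+α}` when `C₃/C₄` is large. -/
theorem decay_barrier_supersolution
    (α β ω₀ τ θ₀ : ℝ) (hα : α ∈ Set.Ioo (0:ℝ) 1) (hβ : β ∈ Set.Ioo (0:ℝ) 1)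
    (hω : ω₀ ∈ Set.Ioo 0 (Real.pi/2)) (hτ : 0 < τ) (hθ₀ : 0 < θ₀)
    (hsum : (1+β+τ)*ω₀ + θ₀ < Real.pi/2) :
    ∃ K > 0, ∀ C₃ C₄ : ℝ, 0 < C₄ → K * C₄ ≤ C₃ →
      ∃ c > 0, ∀ r θ : ℝ, 0 < r → 0 < θ → θ < ω₀ →
        deriv (deriv (fun s : ℝ =>
            s ^ (-1-β) * (C₃ * Real.sin ((1+β+τ)*θ + θ₀) + C₄ * Real.sin θ ^ α))) r
          + r⁻¹ * deriv (fun s : ℝ =>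
            s ^ (-1-β) * (C₃ * Real.sin ((1+β+τ)*θ + θ₀) + C₄ * Real.sin θ ^ α)) r
          + (r⁻¹)^2 * deriv (deriv (fun t : ℝ =>
            r ^ (-1-β) * (C₃ * Real.sin ((1+β+τ)*t + θ₀) + C₄ * Real.sin t ^ α))) θ
        ≤ -c * r ^ (-3-β) * Real.sin θ ^ (-2+α) := by
  obtain ⟨hα0, hα1⟩ := hα
  obtain ⟨hβ0, hβ1⟩ := hβ
  obtain ⟨hω0, hω1⟩ := hω
  have hσβ : (0:ℝ) < (1+β+τ)^2 - (1+β)^2 := by nlinarith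
  have hθ₀half : θ₀ < Real.pi/2 := by nlinarith [mul_pos (by linarith : (0:ℝ) < 1+β+τ) hω0]
  have hsθ₀ : 0 < Real.sin θ₀ :=
    Real.sin_pos_of_pos_of_lt_pi hθ₀ (by linarith [Real.pi_pos])
  refine ⟨(1+β)^2 / (((1+β+τ)^2 - (1+β)^2) * Real.sin θ₀),
    div_pos (by positivity) (mul_pos hσβ hsθ₀), ?_⟩
  intro C₃ C₄ hC₄ hKC
  have hK' : (1+β)^2 / (((1+β+τ)^2 - (1+β)^2) * Real.sin θ₀) * (((1+β+τ)^2 - (1+β)^2) * Real.sin θ₀)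
      = (1+β)^2 := div_mul_cancel₀ _ (mul_pos hσβ hsθ₀).ne'
  have hC₃ : 0 < C₃ :=
    lt_of_lt_of_le (mul_pos (div_pos (by positivity) (mul_pos hσβ hsθ₀)) hC₄) hKC
  refine ⟨C₄ * α * (1-α) / 2, div_pos (mul_pos (mul_pos hC₄ hα0) (by linarith)) two_pos, ?_⟩
  intro r θ hr hθ hθω
  have hsθ : 0 < Real.sin θ :=
    Real.sin_pos_of_pos_of_lt_pi hθ (by linarith [Real.pi_pos])
  have hS1 : Real.sin θ ≤ 1 := Real.sin_le_one θ
  -- rewrite the three derivative values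
  rw [rad2 hr (-1-β) (C₃ * Real.sin ((1+β+τ)*θ + θ₀) + C₄ * Real.sin θ ^ α),
    (rad1 hr.ne' (-1-β) (C₃ * Real.sin ((1+β+τ)*θ + θ₀) + C₄ * Real.sin θ ^ α)).deriv,
    angd2 (r ^ (-1-β)) C₃ C₄ (1+β+τ) θ₀ α hsθ]
  -- normalize exponents
  rw [show α-1-1 = α-2 from by ring]
  rw [show Real.sin θ ^ (α-1) = Real.sin θ ^ (α-2) * Real.sin θ from by
    rw [show α-1 = (α-2)+1 from by ring, Real.rpow_add_one hsθ.ne']]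
  rw [show Real.sin θ ^ α = Real.sin θ ^ (α-2) * Real.sin θ ^ 2 from by
    rw [← Real.rpow_two, ← Real.rpow_add hsθ]; congr 1; ring]
  rw [show Real.sin θ ^ (-2+α) = Real.sin θ ^ (α-2) from by rw [show -2+α = α-2 from by ring]]
  rw [show r ^ ((-1-β)-1) = r ^ (-3-β) * r from by
    rw [show (-1-β)-1 = (-3-β)+1 from by ring, Real.rpow_add_one hr.ne']]
  rw [show r ^ ((-1-β)-2) = r ^ (-3-β) from by rw [show (-1-β)-2 = -3-β from by ring]]
  rw [show r ^ (-1-β) = r ^ (-3-β) * r ^ 2 from by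
    rw [show -1-β = (-3-β)+2 from by ring, Real.rpow_add hr, Real.rpow_two]]
  -- eliminate r⁻¹
  rw [show ∀ A : ℝ, r⁻¹ * ((-1-β) * (r ^ (-3-β) * r) * A) = (-1-β) * (r ^ (-3-β) * A) from
    fun A => by field_simp]
  rw [show ∀ M : ℝ, r⁻¹ ^ 2 * (r ^ (-3-β) * r ^ 2 * M) = r ^ (-3-β) * M from
    fun M => by field_simp]
  -- eliminate cos²
  rw [show Real.cos θ * α * (Real.cos θ * (α-1) * Real.sin θ ^ (α-2))
      = (1 - Real.sin θ ^ 2) * (α * (α-1) * Real.sin θ ^ (α-2)) from by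
    rw [← Real.cos_sq' θ]; ring]
  set T := Real.sin ((1+β+τ)*θ + θ₀) with hTdef
  set Q := Real.sin θ ^ (α-2) with hQdef
  set S := Real.sin θ with hSdef
  set X := r ^ (-3-β) with hXdef
  have hX : 0 < X := Real.rpow_pos_of_pos hr _
  have hQ : 1 ≤ Q := Real.one_le_rpow_of_pos_of_le_one_of_nonpos hsθ hS1 (by linarith)
  have hP : Q * S ^ 2 ≤ 1 := by
    rw [hQdef, hSdef, ← Real.rpow_two, ← Real.rpow_add hsθ, show α-2+2 = α from by ring]
    exact Real.rpow_le_one hsθ.le hS1 hα0.le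
  have hQS2 : 0 ≤ Q * S ^ 2 := mul_nonneg (le_trans zero_le_one hQ) (sq_nonneg S)
  have hmul : 0 < (1+β+τ)*θ := mul_pos (by linarith) hθ
  have hθbar : (1+β+τ)*θ + θ₀ ≤ Real.pi/2 := by nlinarith
  have hT : Real.sin θ₀ ≤ T := by
    rw [hTdef]
    exact Real.strictMonoOn_sin.monotoneOn ⟨by linarith [Real.pi_pos], hθ₀half.le⟩
      ⟨by linarith [Real.pi_pos, hmul], hθbar⟩ (by linarith [hmul])
  clear_value T Q S X
  -- key pointwise inequality
  have s1 : C₃ * ((1+β)^2 - (1+β+τ)^2) * T ≤ -(C₄ * (1+β)^2) := by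
    have a1 : C₃ * (((1+β+τ)^2 - (1+β)^2) * Real.sin θ₀)
        ≤ C₃ * (((1+β+τ)^2 - (1+β)^2) * T) :=
      mul_le_mul_of_nonneg_left (mul_le_mul_of_nonneg_left hT hσβ.le) hC₃.le
    have a2 : (1+β)^2 / (((1+β+τ)^2 - (1+β)^2) * Real.sin θ₀) * C₄
          * (((1+β+τ)^2 - (1+β)^2) * Real.sin θ₀)
        ≤ C₃ * (((1+β+τ)^2 - (1+β)^2) * Real.sin θ₀) :=
      mul_le_mul_of_nonneg_right hKC (mul_pos hσβ hsθ₀).le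
    have a3 : (1+β)^2 / (((1+β+τ)^2 - (1+β)^2) * Real.sin θ₀) * C₄
          * (((1+β+τ)^2 - (1+β)^2) * Real.sin θ₀) = C₄ * (1+β)^2 := by
      linear_combination C₄ * hK'
    linarith [a1, a2, a3]
  have hα2 : α^2 < 1 := by
    nlinarith [mul_pos (show (0:ℝ) < 1-α by linarith) (show (0:ℝ) < 1+α by linarith)]
  have s2 : C₄ * ((1+β)^2 - α^2) * (Q * S^2) ≤ C₄ * (1+β)^2 := by
    have b1 : 0 ≤ C₄ * ((1+β)^2 - α^2) :=
      mul_nonneg hC₄.le (by nlinarith [sq_nonneg β, mul_nonneg hβ0.le hβ0.le])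
    calc C₄ * ((1+β)^2 - α^2) * (Q * S^2) ≤ C₄ * ((1+β)^2 - α^2) * 1 :=
          mul_le_mul_of_nonneg_left hP b1
      _ ≤ C₄ * (1+β)^2 := by nlinarith [mul_nonneg hC₄.le (sq_nonneg α)]
  have s3 : C₄ * (α*(α-1)) * Q ≤ -(C₄ * α * (1-α) / 2) * Q := by
    have b2 : 0 ≤ C₄ * α * (1-α) * Q :=
      mul_nonneg (mul_nonneg (mul_nonneg hC₄.le hα0.le) (by linarith)) (by linarith)
    linarith
  have key : C₃ * ((1+β)^2 - (1+β+τ)^2) * T + C₄ * ((1+β)^2 - α^2) * (Q * S^2)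
      + C₄ * (α*(α-1)) * Q ≤ -(C₄ * α * (1-α) / 2) * Q := by linarith
  linarith [mul_le_mul_of_nonneg_left key hX.le]
end

section
/- Let $\alpha \in (0,1)$, $\omega_0 \in (0,\pi/2)$, and $\nu_n > 0$, $\nu_t \ge 0$ with $\nu_n^2+\nu_t^2=1$. Set $\bar\theta = (1+\alpha+\tau)\theta + \theta_0$ with $\tau,\theta_0 > 0$ small so that $(1+\alpha+\tau)\omega_0+\theta_0 < \pi/2$. Then the function $v_3(r,\theta) = r^{1+\alpha}(C_5\sin\bar\theta + C_6(\sin\theta)^{\alpha})$ satisfies, along the ray $\theta = \omega_0$, the oblique-derivative lower bound $\nu_n\,r^{-1}\partial_\theta v_3 + \nu_t\,\partial_r v_3 \ge c\, C_5\, r^{\alpha}$ for some $c > 0$ depending on $\alpha,\tau,\theta_0,\omega_0$, provided $C_5, C_6 > 0$. -/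
/-- oblique-derivative lower bound for the barrier
`v₃ = r^{1+α}(C₅ sin θ̄ + C₆ (sin θ)^α)` along the ray `θ = ω₀`. -/
theorem barrier_v3_oblique_lower_bound
    (α ω₀ τ θ₀ νn νt : ℝ) (hα : α ∈ Set.Ioo (0:ℝ) 1)
    (hω : ω₀ ∈ Set.Ioo 0 (Real.pi/2)) (hτ : 0 < τ) (hθ₀ : 0 < θ₀)
    (hsum : (1+α+τ)*ω₀ + θ₀ < Real.pi/2)
    (hνn : 0 < νn) (hνt : 0 ≤ νt) (hunit : νn^2 + νt^2 = 1) :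
    ∃ c > 0, ∀ C₅ C₆ : ℝ, 0 < C₅ → 0 < C₆ → ∀ r : ℝ, 0 < r →
      c * C₅ * r ^ α ≤
        νn * r⁻¹ * deriv (fun t : ℝ =>
            r ^ (1+α) * (C₅ * Real.sin ((1+α+τ)*t + θ₀) + C₆ * Real.sin t ^ α)) ω₀
        + νt * deriv (fun s : ℝ =>
            s ^ (1+α) * (C₅ * Real.sin ((1+α+τ)*ω₀ + θ₀) + C₆ * Real.sin ω₀ ^ α)) r := by
  obtain ⟨hα0, hα1⟩ := hα
  obtain ⟨hω0, hω1⟩ := hω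
  have hpi := Real.pi_pos
  have ha0 : (0:ℝ) < 1+α+τ := by positivity
  have hθb0 : 0 < (1+α+τ) * ω₀ + θ₀ := by positivity
  have hcosb : 0 < Real.cos ((1+α+τ) * ω₀ + θ₀) :=
    Real.cos_pos_of_mem_Ioo ⟨by linarith, hsum⟩
  have hsinb : 0 < Real.sin ((1+α+τ) * ω₀ + θ₀) :=
    Real.sin_pos_of_pos_of_lt_pi hθb0 (by linarith)
  have hsinω : 0 < Real.sin ω₀ := Real.sin_pos_of_pos_of_lt_pi hω0 (by linarith)
  have hcosω : 0 < Real.cos ω₀ := Real.cos_pos_of_mem_Ioo ⟨by linarith, hω1⟩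
  refine ⟨νn * (1+α+τ) * Real.cos ((1+α+τ) * ω₀ + θ₀), by positivity, ?_⟩
  intro C₅ C₆ hC₅ hC₆ r hr
  have hd1 : HasDerivAt (fun t : ℝ =>
      r ^ (1+α) * (C₅ * Real.sin ((1+α+τ) * t + θ₀) + C₆ * Real.sin t ^ α))
      (r ^ (1+α) * (C₅ * (Real.cos ((1+α+τ) * ω₀ + θ₀) * ((1+α+τ) * 1)) +
        C₆ * (Real.cos ω₀ * α * Real.sin ω₀ ^ (α - 1)))) ω₀ := by
    apply HasDerivAt.const_mul
    apply HasDerivAt.add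
    · exact ((Real.hasDerivAt_sin ((1+α+τ) * ω₀ + θ₀)).comp ω₀
        (((hasDerivAt_id ω₀).const_mul (1+α+τ)).add_const θ₀)).const_mul C₅
    · exact ((Real.hasDerivAt_sin ω₀).rpow_const (Or.inl hsinω.ne')).const_mul C₆
  have hd2 : HasDerivAt (fun s : ℝ =>
      s ^ (1+α) * (C₅ * Real.sin ((1+α+τ) * ω₀ + θ₀) + C₆ * Real.sin ω₀ ^ α))
      ((1+α) * r ^ (1+α-1) * (C₅ * Real.sin ((1+α+τ) * ω₀ + θ₀) + C₆ * Real.sin ω₀ ^ α)) r :=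
    (Real.hasDerivAt_rpow_const (Or.inl hr.ne')).mul_const _
  rw [hd1.deriv, hd2.deriv]
  have hrpow : r ^ (1+α) = r * r ^ α := by
    rw [Real.rpow_add hr, Real.rpow_one]
  have hrpow2 : r ^ (1+α-1) = r ^ α := by norm_num
  rw [hrpow, hrpow2]
  have hrinv : r⁻¹ * (r * r ^ α) = r ^ α := by
    field_simp
  have hpos1 : 0 ≤ νn * r ^ α * (C₆ * (Real.cos ω₀ * α * Real.sin ω₀ ^ (α-1))) := by
    positivity
  have hpos2 : 0 ≤ νt * ((1+α) * r ^ α *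
      (C₅ * Real.sin ((1+α+τ) * ω₀ + θ₀) + C₆ * Real.sin ω₀ ^ α)) := by
    positivity
  have key : νn * (1+α+τ) * Real.cos ((1+α+τ) * ω₀ + θ₀) * C₅ * r ^ α =
      νn * (r ^ α) * (C₅ * (Real.cos ((1+α+τ) * ω₀ + θ₀) * ((1+α+τ) * 1))) := by ring
  calc νn * (1+α+τ) * Real.cos ((1+α+τ) * ω₀ + θ₀) * C₅ * r ^ α
      ≤ νn * (r ^ α) * (C₅ * (Real.cos ((1+α+τ) * ω₀ + θ₀) * ((1+α+τ) * 1)) +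
          C₆ * (Real.cos ω₀ * α * Real.sin ω₀ ^ (α-1)))
        + νt * ((1+α) * r ^ α *
          (C₅ * Real.sin ((1+α+τ) * ω₀ + θ₀) + C₆ * Real.sin ω₀ ^ α)) := by
        rw [key]; nlinarith [hpos1, hpos2]
    _ = νn * r⁻¹ * (r * r ^ α * (C₅ * (Real.cos ((1+α+τ) * ω₀ + θ₀) * ((1+α+τ) * 1)) +
          C₆ * (Real.cos ω₀ * α * Real.sin ω₀ ^ (α-1))))
        + νt * ((1+α) * r ^ α *
          (C₅ * Real.sin ((1+α+τ) * ω₀ + θ₀) + C₆ * Real.sin ω₀ ^ α)) := by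
        rw [← mul_assoc, mul_assoc νn r⁻¹, ← mul_assoc r⁻¹, hrinv, mul_assoc]
end

section
/- Let $v \in C^{2}$ on the sector $\mathbb{D} = \{0 < k_1 z_2 < z_1\}$ satisfy the pointwise bounds $|v(\mathbf{z})| \le M(|\mathbf{z}|+1)^{-1-\beta}$ and $|\nabla v(\mathbf{z})| \le M(|\mathbf{z}|+1)^{-1-\beta}(z_2+1)^{-1}$ for some $M, \beta > 0$, and suppose $a_{11}, a_{12}$ are measurable with $|a_{11}| \le \Lambda$ and $|a_{12}(\mathbf{z})| \le \Lambda(|\mathbf{z}|+1)^{-1-\beta}$. Assume additionally $|v_{z_1}(\mathbf{z})| \le M|\mathbf{z}|^{-2-\beta}$ for $|\mathbf{z}| \ge 1$. Then for any point $\mathbf{z}^0 = (z_1^0, z_2^0) \in \mathbb{D}$ with $|\mathbf{z}^0| \ge 1$, the integral along the vertical segment from $\mathbf{z}^0$ up to the boundary point $\mathbf{z}^I = (z_1^0, z_1^0/k_1)$ satisfies $\Big|\int_{z_2^0}^{z_2^I}\big(a_{11}v_{z_1} + a_{12}v_{z_2}\big)(z_1^0, s)\,ds\Big| \le C M\Lambda\,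 |\mathbf{z}^0|^{-1-\beta}$ for a constant $C$ depending only on $k_1$ and $\beta$. -/
/-!
On the segment, `‖(z₀.1, s)‖ ≥ max ‖z₀‖ s ≥ (‖z₀‖ + s) / 2`. The term `a11 v_{z₁}` decays like
`‖z‖^(-2-β)` by the extra hypothesis on `v_{z₁}`, and `a12 v_{z₂}` like the product of two factors
`(‖z‖ + 1)^(-1-β)`. So the integrand is `O((‖z₀‖ + s)^(-2-β))`, and integrating this over `s ≥ 0`
gives `‖z₀‖^(-1-β) / (1 + β)`; without the extra decay of `v_{z₁}` one would only get a logarithm.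
-/

open Set MeasureTheory Real
open scoped Interval

lemma abs_intervalIntegral_le_of_forall_Ioo {f g : ℝ → ℝ} {a b : ℝ} (hab : a ≤ b)
    (hg : IntervalIntegrable g volume a b) (h : ∀ s ∈ Ioo a b, |f s| ≤ g s) :
    |∫ s in a..b, f s| ≤ ∫ s in a..b, g s := by
  have h_ae : ∀ᵐ s, s ∈ Ioc a b → ‖f s‖ ≤ g s := by
    filter_upwards [compl_mem_ae_iff.mpr (measure_singleton b)] with s hsb hs
    exact h s ⟨hs.1, lt_of_le_of_ne hs.2 hsb⟩
  simpa only [Real.norm_eq_abs] using intervalIntegral.norm_integral_le_of_norm_le hab h_ae hg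

lemma intervalIntegrable_add_rpow {r a b : ℝ} (p : ℝ) (hr : 0 < r) (ha : 0 ≤ a) (hab : a ≤ b) :
    IntervalIntegrable (fun s ↦ (r + s) ^ p) volume a b := by
  refine ContinuousOn.intervalIntegrable fun s hs ↦ ?_
  rw [uIcc_of_le hab] at hs
  exact ((continuous_const_add r).continuousAt.rpow_const (Or.inl (by linarith [hs.1]))
    ).continuousWithinAt

lemma integral_add_rpow_neg_two_sub_le {r a b β : ℝ} (hr : 0 < r) (ha : 0 ≤ a) (hab : a ≤ b)
    (hβ : -1 < β) :
    ∫ s in a..b, (r + s) ^ (-2 - β) ≤ r ^ (-1 - β) / (1 + β) := by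
  have h0 : (0 : ℝ) ∉ [[r + a, r + b]] := by
    rw [uIcc_of_le (by linarith)]
    exact fun h ↦ by linarith [h.1]
  rw [intervalIntegral.integral_comp_add_left (fun x ↦ x ^ (-2 - β)) r,
    integral_rpow (Or.inr ⟨by linarith, h0⟩), show -2 - β + 1 = -(1 + β) by ring,
    show -1 - β = -(1 + β) by ring, div_neg, ← neg_div, neg_sub]
  have hra : (r + a) ^ (-(1 + β)) ≤ r ^ (-(1 + β)) :=
    rpow_le_rpow_of_nonpos hr (by linarith) (by linarith)
  have hrb : 0 ≤ (r + b) ^ (-(1 + β)) := rpow_nonneg (by linarith) _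
  exact div_le_div_of_nonneg_right (by linarith) (by linarith)

lemma rpow_neg_le_two_rpow_mul_add_rpow_neg {r s N γ : ℝ} (hr : 0 < r) (hs : 0 ≤ s)
    (hrN : r ≤ N) (hsN : s ≤ N) (hγ : 0 ≤ γ) :
    N ^ (-γ) ≤ 2 ^ γ * (r + s) ^ (-γ) := by
  calc N ^ (-γ) ≤ ((r + s) / 2) ^ (-γ) :=
        rpow_le_rpow_of_nonpos (by positivity) (by linarith) (by linarith)
    _ = 2 ^ γ * (r + s) ^ (-γ) := by
        rw [div_rpow (by positivity) zero_le_two, rpow_neg zero_le_two, div_inv_eq_mul, mul_comm]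

lemma add_one_rpow_mul_self_le {N β : ℝ} (hN : 1 ≤ N) (hβ : 0 ≤ β) :
    (N + 1) ^ (-1 - β) * (N + 1) ^ (-1 - β) ≤ N ^ (-2 - β) := by
  rw [← rpow_add (by linarith)]
  calc (N + 1) ^ (-1 - β + (-1 - β)) ≤ N ^ (-1 - β + (-1 - β)) :=
        rpow_le_rpow_of_nonpos (by linarith) (by linarith) (by linarith)
    _ ≤ N ^ (-2 - β) := rpow_le_rpow_of_exponent_le hN (by linarith)

lemma abs_mul_add_mul_le_of_decay {A₁ A₂ x₁ x₂ Λ M N β : ℝ} (hN : 1 ≤ N) (hβ : 0 ≤ β)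
    (hA₁ : |A₁| ≤ Λ) (hA₂ : |A₂| ≤ Λ * (N + 1) ^ (-1 - β))
    (hx₁ : |x₁| ≤ M * N ^ (-2 - β)) (hx₂ : |x₂| ≤ M * (N + 1) ^ (-1 - β)) :
    |A₁ * x₁ + A₂ * x₂| ≤ 2 * M * Λ * N ^ (-2 - β) := by
  have hΛ : 0 ≤ Λ := (abs_nonneg _).trans hA₁
  have hM : 0 ≤ M := nonneg_of_mul_nonneg_left ((abs_nonneg _).trans hx₂)
    (rpow_pos_of_pos (by linarith) _)
  calc |A₁ * x₁ + A₂ * x₂| ≤ |A₁| * |x₁| + |A₂| * |x₂| := by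
        simpa only [abs_mul] using abs_add_le (A₁ * x₁) (A₂ * x₂)
    _ ≤ Λ * (M * N ^ (-2 - β)) + Λ * (N + 1) ^ (-1 - β) * (M * (N + 1) ^ (-1 - β)) := by
        gcongr
    _ = M * Λ * N ^ (-2 - β) + M * Λ * ((N + 1) ^ (-1 - β) * (N + 1) ^ (-1 - β)) := by ring
    _ ≤ M * Λ * N ^ (-2 - β) + M * Λ * N ^ (-2 - β) := by
        gcongr; exact add_one_rpow_mul_self_le hN hβ
    _ = 2 * M * Λ * N ^ (-2 - β) := by ring

lemma abs_apply_zero_one_le_opNorm (L : ℝ × ℝ →L[ℝ] ℝ) : |L (0, 1)| ≤ ‖L‖ := by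
  simpa [Prod.norm_def] using L.le_opNorm (0, 1)

lemma mem_sector_of_mem_Ioo {k : ℝ} {z : ℝ × ℝ} {s : ℝ} (hk : 0 < k) (hz : 0 < k * z.2)
    (hs : s ∈ Ioo z.2 (z.1 / k)) : 0 < k * s ∧ k * s < z.1 := by
  have hz₂ : 0 < z.2 := pos_of_mul_pos_right hz hk.le
  refine ⟨mul_pos hk (hz₂.trans hs.1), ?_⟩
  rw [← lt_div_iff₀' hk]
  exact hs.2

lemma norm_le_norm_mk_of_snd_le {z : ℝ × ℝ} {s : ℝ} (hz : 0 ≤ z.2) (hs : z.2 ≤ s) :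
    ‖z‖ ≤ ‖(z.1, s)‖ := by
  simp only [Prod.norm_def, Real.norm_eq_abs]
  exact max_le_max le_rfl (abs_le_abs_of_nonneg hz hs)

/-- the key integral estimate along vertical segments giving the
decay rate `|z⁰|^{-1-β}` for the pressure perturbation. -/
theorem vertical_integral_decay_estimate
    (k₁ β : ℝ) (hk : 0 < k₁) (hβ : 0 < β) :
    ∃ C > 0, ∀ (v a11 a12 : ℝ × ℝ → ℝ) (M Λ : ℝ), 0 < M → 0 < Λ →
      ContDiffOn ℝ 2 v {z : ℝ × ℝ | 0 < k₁ * z.2 ∧ k₁ * z.2 < z.1} →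
      Measurable a11 → Measurable a12 →
      (∀ z : ℝ × ℝ, 0 < k₁ * z.2 → k₁ * z.2 < z.1 →
        |v z| ≤ M * (‖z‖ + 1) ^ (-1-β)) →
      (∀ z : ℝ × ℝ, 0 < k₁ * z.2 → k₁ * z.2 < z.1 →
        ‖fderiv ℝ v z‖ ≤ M * (‖z‖ + 1) ^ (-1-β) * (z.2 + 1)⁻¹) →
      (∀ z : ℝ × ℝ, 0 < k₁ * z.2 → k₁ * z.2 < z.1 → 1 ≤ ‖z‖ →
        |fderiv ℝ v z (1, 0)| ≤ M * ‖z‖ ^ (-2-β)) →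
      (∀ z : ℝ × ℝ, |a11 z| ≤ Λ) →
      (∀ z : ℝ × ℝ, |a12 z| ≤ Λ * (‖z‖ + 1) ^ (-1-β)) →
      ∀ z₀ : ℝ × ℝ, 0 < k₁ * z₀.2 → k₁ * z₀.2 < z₀.1 → 1 ≤ ‖z₀‖ →
        |∫ s in z₀.2..(z₀.1 / k₁),
            (a11 (z₀.1, s) * fderiv ℝ v (z₀.1, s) (1, 0)
              + a12 (z₀.1, s) * fderiv ℝ v (z₀.1, s) (0, 1))| ≤
          C * M * Λ * ‖z₀‖ ^ (-1-β) := by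
  refine ⟨2 * 2 ^ (2 + β) / (1 + β), by positivity, ?_⟩
  intro v a11 a12 M Λ hM hΛ _ _ _ _ hgrad hv₁ ha11 ha12 z₀ h₀ h₀' hz₀
  set r := ‖z₀‖
  have hr : 0 < r := zero_lt_one.trans_le hz₀
  have hz₀₂ : 0 < z₀.2 := pos_of_mul_pos_right h₀ hk.le
  have hab : z₀.2 ≤ z₀.1 / k₁ := (le_div_iff₀' hk).mpr h₀'.le
  have hpointwise : ∀ s ∈ Ioo z₀.2 (z₀.1 / k₁),
      |a11 (z₀.1, s) * fderiv ℝ v (z₀.1, s) (1, 0) + a12 (z₀.1, s) * fderiv ℝ v (z₀.1, s) (0, 1)|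
        ≤ 2 * M * Λ * 2 ^ (2 + β) * (r + s) ^ (-2 - β) := by
    intro s hs
    obtain ⟨hks, hks'⟩ := mem_sector_of_mem_Ioo hk h₀ hs
    have hs₀ : 0 ≤ s := hz₀₂.le.trans hs.1.le
    have hrN : r ≤ ‖(z₀.1, s)‖ := norm_le_norm_mk_of_snd_le hz₀₂.le hs.1.le
    have hsN : s ≤ ‖(z₀.1, s)‖ := (le_abs_self s).trans (norm_snd_le (z₀.1, s))
    have hx₂ : |fderiv ℝ v (z₀.1, s) (0, 1)| ≤ M * (‖(z₀.1, s)‖ + 1) ^ (-1 - β) :=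
      (abs_apply_zero_one_le_opNorm _).trans <| (hgrad _ hks hks').trans <|
        mul_le_of_le_one_right (by positivity) (inv_le_one_of_one_le₀ (by simpa using hs₀))
    calc _ ≤ 2 * M * Λ * ‖(z₀.1, s)‖ ^ (-2 - β) :=
          abs_mul_add_mul_le_of_decay (hz₀.trans hrN) hβ.le (ha11 _) (ha12 _)
            (hv₁ _ hks hks' (hz₀.trans hrN)) hx₂
      _ ≤ 2 * M * Λ * (2 ^ (2 + β) * (r + s) ^ (-2 - β)) := by
          gcongr
          simpa only [neg_add'] using rpow_neg_le_two_rpow_mul_add_rpow_neg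
            hr hs₀ hrN hsN (by positivity : (0 : ℝ) ≤ 2 + β)
      _ = 2 * M * Λ * 2 ^ (2 + β) * (r + s) ^ (-2 - β) := by ring
  calc _ ≤ ∫ s in z₀.2..z₀.1 / k₁, 2 * M * Λ * 2 ^ (2 + β) * (r + s) ^ (-2 - β) :=
        abs_intervalIntegral_le_of_forall_Ioo hab
          ((intervalIntegrable_add_rpow _ hr hz₀₂.le hab).const_mul _) hpointwise
    _ = 2 * M * Λ * 2 ^ (2 + β) * ∫ s in z₀.2..z₀.1 / k₁, (r + s) ^ (-2 - β) :=
        intervalIntegral.integral_const_mul _ _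
    _ ≤ 2 * M * Λ * 2 ^ (2 + β) * (r ^ (-1 - β) / (1 + β)) := by
        gcongr
        exact integral_add_rpow_neg_two_sub_le hr hz₀₂.le hab (by linarith)
    _ = 2 * 2 ^ (2 + β) / (1 + β) * M * Λ * r ^ (-1 - β) := by ring
end

section
/- Let $\omega_0 \in (0, \pi/2)$ and $\beta, \tau, \theta_0 > 0$ small so that $(2+\beta+\tau)\omega_0 + \theta_0 < \pi$. Then with $\bar\theta = (2+\beta+\tau)\theta + \theta_0$, the function $v_5(r,\theta) = r^{-2-\beta}(\sin\bar\theta + (\sin\theta)^{\alpha})$, for $\alpha\in(0,1)$, satisfies $\sin\bar\theta > 0$ for all $\theta\in[0,\omega_0]$ (so $v_5 > 0$ on the closed sector minus the origin) and $\Delta v_5 \le -c\,r^{-4-\beta}(\sin\theta)^{-2+\alpha}$ on the open sector, for some $c > 0$, after multiplying the $\sin\bar\theta$ term by a sufficiently large constant. -/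
/-!
In polar coordinates `Δ (r ^ a * g θ) = r ^ (a - 2) * (a ^ 2 * g θ + g'' θ)`. Take `a = -2 - β`,
`m = 2 + β + τ` and `g θ = K sin (m θ + θ₀) + (sin θ) ^ α`. The first summand of `g` contributes
`-(m ^ 2 - a ^ 2) K sin (m θ + θ₀)`, which is negative because `m > |a|` and `m θ + θ₀` stays in
`(0, π)`, where `sin` is bounded below by its values at the endpoints. The second contributes
`α (α - 1) (sin θ) ^ (α - 2) + (a ^ 2 - α ^ 2) (sin θ) ^ α`. For `K` large the first contribution
swallows the bounded term `a ^ 2 (sin θ) ^ α`, which leaves the singular term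
`-α (1 - α) (sin θ) ^ (α - 2)`.
-/

open Real Set Filter Topology

noncomputable def polarLaplacian (u : ℝ → ℝ → ℝ) (r θ : ℝ) : ℝ :=
  deriv (deriv fun s => u s θ) r + r⁻¹ * deriv (fun s => u s θ) r
    + (r⁻¹) ^ 2 * deriv (deriv fun t => u r t) θ

theorem deriv_deriv_rpow_add_inv_mul_deriv_rpow (a : ℝ) {r : ℝ} (hr : r ≠ 0) :
    deriv (deriv fun s => s ^ a) r + r⁻¹ * deriv (fun s => s ^ a) r = a ^ 2 * r ^ (a - 2) := by
  have h : r⁻¹ * r ^ (a - 1) = r ^ (a - 2) := by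
    rw [show a - 2 = a - 1 - 1 by ring, rpow_sub_one hr (a - 1), inv_mul_eq_div]
  simp only [deriv_rpow_const', deriv_const_mul_field']
  rw [show a - 1 - 1 = a - 2 by ring, ← mul_assoc, mul_left_comm, h]
  ring

theorem polarLaplacian_rpow_mul (a : ℝ) (g : ℝ → ℝ) {r : ℝ} (hr : r ≠ 0) (θ : ℝ) :
    polarLaplacian (fun s t => s ^ a * g t) r θ
      = r ^ (a - 2) * (a ^ 2 * g θ + deriv (deriv g) θ) := by
  have hradial := deriv_deriv_rpow_add_inv_mul_deriv_rpow a hr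
  have hangular : (r⁻¹) ^ 2 * r ^ a = r ^ (a - 2) := by
    rw [inv_pow, inv_mul_eq_div, ← rpow_sub_natCast hr]
    norm_num
  simp only [polarLaplacian, deriv_mul_const_field', deriv_const_mul_field']
  linear_combination g θ * hradial + deriv (deriv g) θ * hangular

theorem deriv_deriv_fun_add {f g : ℝ → ℝ} {x : ℝ} (hf : ContDiffAt ℝ 2 f x)
    (hg : ContDiffAt ℝ 2 g x) :
    deriv (deriv fun t => f t + g t) x = deriv (deriv f) x + deriv (deriv g) x := by
  simpa only [iteratedDeriv_eq_iterate, Function.iterate_succ, Function.iterate_zero,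
    Function.comp_apply, Function.id_comp] using iteratedDeriv_fun_add hf hg

theorem deriv_deriv_sin_mul_add (m c x : ℝ) :
    deriv (deriv fun t => sin (m * t + c)) x = -(m ^ 2 * sin (m * x + c)) := by
  have hlin (t : ℝ) : HasDerivAt (fun t => m * t + c) m t := by
    simpa using ((hasDerivAt_id t).const_mul m).add_const c
  have hd : deriv (fun t => sin (m * t + c)) = fun t => cos (m * t + c) * m :=
    funext fun t => ((hasDerivAt_sin _).comp t (hlin t)).deriv
  have hcos : HasDerivAt (fun t => cos (m * t + c) * m) (-sin (m * x + c) * m * m) x :=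
    ((hasDerivAt_cos _).comp x (hlin x)).mul_const m
  rw [hd, hcos.deriv]
  ring

theorem deriv_deriv_sin_rpow (α : ℝ) {x : ℝ} (hx : 0 < sin x) :
    deriv (deriv fun t => sin t ^ α) x
      = α * (α - 1) * sin x ^ (α - 2) - α ^ 2 * sin x ^ α := by
  have hd : deriv (fun t => sin t ^ α) =ᶠ[𝓝 x] fun t => α * (cos t * sin t ^ (α - 1)) := by
    filter_upwards [continuous_sin.isOpen_preimage _ isOpen_Ioi |>.mem_nhds hx] with t ht
    simpa [mul_assoc, mul_left_comm] using
      ((hasDerivAt_sin t).rpow_const (p := α) (Or.inl (ne_of_gt ht))).deriv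
  have hd' : HasDerivAt (fun t => α * (cos t * sin t ^ (α - 1)))
      (α * (-sin x * sin x ^ (α - 1) + cos x * (cos x * (α - 1) * sin x ^ (α - 1 - 1)))) x :=
    ((hasDerivAt_cos x).mul ((hasDerivAt_sin x).rpow_const (Or.inl hx.ne'))).const_mul α
  rw [hd.deriv_eq, hd'.deriv, show α - 1 - 1 = α - 2 by ring]
  have h1 : sin x ^ (α - 1) * sin x = sin x ^ α := by
    rw [← rpow_add_one hx.ne']
    ring_nf
  have h2 : sin x ^ (α - 2) * sin x ^ 2 = sin x ^ α := by
    rw [← rpow_natCast, ← rpow_add hx]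
    ring_nf
  linear_combination (-α) * h1 + α * (α - 1) * sin x ^ (α - 2) * cos_sq_add_sin_sq x
    - α * (α - 1) * h2

theorem deriv_deriv_const_mul_sin_add_sin_rpow (K m c α : ℝ) {x : ℝ} (hx : 0 < sin x) :
    deriv (deriv fun t => K * sin (m * t + c) + sin t ^ α) x
      = -(K * m ^ 2 * sin (m * x + c))
        + (α * (α - 1) * sin x ^ (α - 2) - α ^ 2 * sin x ^ α) := by
  rw [deriv_deriv_fun_add (by fun_prop) (contDiff_sin.contDiffAt.rpow_const_of_ne hx.ne')]
  simp only [deriv_const_mul_field']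
  rw [deriv_deriv_sin_mul_add, deriv_deriv_sin_rpow α hx]
  ring

theorem min_sin_le_sin_of_mem_Icc {x y z : ℝ} (hx : 0 ≤ x) (hy : y ≤ π) (hz : z ∈ Icc x y) :
    min (sin x) (sin y) ≤ sin z :=
  strictConcaveOn_sin_Icc.concaveOn.min_le_of_mem_Icc ⟨hx, hz.1.trans (hz.2.trans hy)⟩
    ⟨hx.trans (hz.1.trans hz.2), hy⟩ hz

theorem sin_mul_add_pos_of_mem_Icc {m c ω₀ θ : ℝ} (hm : 0 ≤ m) (hc : 0 < c)
    (hmc : m * ω₀ + c < π) (hθ : θ ∈ Icc 0 ω₀) : 0 < sin (m * θ + c) :=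
  sin_pos_of_pos_of_lt_pi (by nlinarith [hθ.1]) (by nlinarith [hθ.2])

theorem exists_one_le_forall_le_mul_sin_mul_add {m c ω₀ A : ℝ} (b : ℝ) (hm : 0 ≤ m)
    (hc : 0 < c) (hmc : m * ω₀ + c < π) (hA : 0 < A) :
    ∃ K ≥ (1 : ℝ), ∀ θ ∈ Ioo 0 ω₀, b ≤ K * A * sin (m * θ + c) := by
  set s₀ := min (sin c) (sin (m * ω₀ + c))
  refine ⟨max 1 (b / (A * s₀)), le_max_left _ _, fun θ hθ => ?_⟩
  have hω₀ : 0 ≤ ω₀ := hθ.1.le.trans hθ.2.le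
  have hs₀ : 0 < s₀ :=
    lt_min (by simpa using sin_mul_add_pos_of_mem_Icc hm hc hmc ⟨le_rfl, hω₀⟩)
      (sin_mul_add_pos_of_mem_Icc hm hc hmc ⟨hω₀, le_rfl⟩)
  have hs₀_le : s₀ ≤ sin (m * θ + c) :=
    min_sin_le_sin_of_mem_Icc hc.le hmc.le ⟨by nlinarith [hθ.1], by nlinarith [hθ.2]⟩
  calc b = b / (A * s₀) * (A * s₀) := (div_mul_cancel₀ _ (by positivity)).symm
    _ ≤ max 1 (b / (A * s₀)) * (A * s₀) := by gcongr; exact le_max_right _ _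
    _ ≤ _ := by rw [← mul_assoc]; gcongr

theorem enhanced_decay_barrier_general
    (α β ω₀ τ θ₀ : ℝ) (hα : α ∈ Set.Ioo (0:ℝ) 1)
    (hβ : 0 < β) (hτ : 0 < τ) (hθ₀ : 0 < θ₀)
    (hsum : (2+β+τ)*ω₀ + θ₀ < Real.pi) :
    (∀ θ ∈ Set.Icc 0 ω₀, 0 < Real.sin ((2+β+τ)*θ + θ₀)) ∧
    (∀ r : ℝ, 0 < r → ∀ θ ∈ Set.Icc 0 ω₀,
      0 < r ^ (-2-β) * (Real.sin ((2+β+τ)*θ + θ₀) + Real.sin θ ^ α)) ∧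
    (∃ K ≥ (1:ℝ), ∃ c > 0, ∀ r θ : ℝ, 0 < r → 0 < θ → θ < ω₀ →
      deriv (deriv (fun s : ℝ =>
          s ^ (-2-β) * (K * Real.sin ((2+β+τ)*θ + θ₀) + Real.sin θ ^ α))) r
        + r⁻¹ * deriv (fun s : ℝ =>
          s ^ (-2-β) * (K * Real.sin ((2+β+τ)*θ + θ₀) + Real.sin θ ^ α)) r
        + (r⁻¹)^2 * deriv (deriv (fun t : ℝ =>
          r ^ (-2-β) * (K * Real.sin ((2+β+τ)*t + θ₀) + Real.sin t ^ α))) θ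
      ≤ -c * r ^ (-4-β) * Real.sin θ ^ (-2+α)) := by
  obtain ⟨hα0, hα1⟩ := hα
  have hm : 0 ≤ 2 + β + τ := by linarith
  have hlt_pi : ∀ θ ∈ Icc 0 ω₀, θ < π := fun θ hθ => by
    nlinarith [hθ.2, mul_nonneg (by linarith : (0 : ℝ) ≤ 1 + β + τ) (hθ.1.trans hθ.2)]
  have hsin_pos := fun θ ↦ sin_mul_add_pos_of_mem_Icc (θ := θ) hm hθ₀ hsum
  refine ⟨hsin_pos, fun r hr θ hθ => mul_pos (rpow_pos_of_pos hr _)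
    (add_pos_of_pos_of_nonneg (hsin_pos θ hθ)
      (rpow_nonneg (sin_nonneg_of_nonneg_of_le_pi hθ.1 (hlt_pi θ hθ).le) _)), ?_⟩
  obtain ⟨K, hK1, hK⟩ := exists_one_le_forall_le_mul_sin_mul_add ((2 + β) ^ 2) hm hθ₀ hsum
    (by nlinarith : 0 < (2 + β + τ) ^ 2 - (2 + β) ^ 2)
  refine ⟨K, hK1, α * (1 - α), mul_pos hα0 (by linarith), fun r θ hr hθ0 hθω => ?_⟩
  have hsinθ : 0 < sin θ := sin_pos_of_pos_of_lt_pi hθ0 (hlt_pi θ ⟨hθ0.le, hθω.le⟩)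
  show polarLaplacian (fun s t => s ^ (-2-β) * (K * sin ((2+β+τ)*t + θ₀) + sin t ^ α)) r θ ≤ _
  rw [polarLaplacian_rpow_mul _ _ hr.ne', deriv_deriv_const_mul_sin_add_sin_rpow _ _ _ _ hsinθ,
    show -2 - β - 2 = -4 - β by ring, show -2 + α = α - 2 by ring]
  have hbracket : (-2 - β) ^ 2 * (K * sin ((2 + β + τ) * θ + θ₀) + sin θ ^ α)
      + (-(K * (2 + β + τ) ^ 2 * sin ((2 + β + τ) * θ + θ₀))
        + (α * (α - 1) * sin θ ^ (α - 2) - α ^ 2 * sin θ ^ α))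
      ≤ -(α * (1 - α)) * sin θ ^ (α - 2) := by
    have hP0 : 0 ≤ sin θ ^ α := rpow_nonneg hsinθ.le α
    have hP1 : sin θ ^ α ≤ 1 := rpow_le_one hsinθ.le (sin_le_one θ) hα0.le
    nlinarith [hK θ ⟨hθ0, hθω⟩, mul_nonneg (sq_nonneg (2 + β)) (sub_nonneg.2 hP1),
      mul_nonneg (sq_nonneg α) hP0]
  linear_combination mul_le_mul_of_nonneg_left hbracket (rpow_pos_of_pos hr (-4 - β)).le

/-- the barrier `v₅ = r^{-2-β}(sin θ̄ + (sin θ)^α)` is positive on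
the closed sector minus the origin and, after enlarging the `sin θ̄` term, its
polar Laplacian is bounded by `-c r^{-4-β} (sin θ)^{-2+α}`. -/
theorem enhanced_decay_barrier
    (α β ω₀ τ θ₀ : ℝ) (hα : α ∈ Set.Ioo (0:ℝ) 1)
    (hω : ω₀ ∈ Set.Ioo 0 (Real.pi/2)) (hβ : 0 < β) (hτ : 0 < τ) (hθ₀ : 0 < θ₀)
    (hsum : (2+β+τ)*ω₀ + θ₀ < Real.pi) :
    (∀ θ ∈ Set.Icc 0 ω₀, 0 < Real.sin ((2+β+τ)*θ + θ₀)) ∧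
    (∀ r : ℝ, 0 < r → ∀ θ ∈ Set.Icc 0 ω₀,
      0 < r ^ (-2-β) * (Real.sin ((2+β+τ)*θ + θ₀) + Real.sin θ ^ α)) ∧
    (∃ K ≥ (1:ℝ), ∃ c > 0, ∀ r θ : ℝ, 0 < r → 0 < θ → θ < ω₀ →
      deriv (deriv (fun s : ℝ =>
          s ^ (-2-β) * (K * Real.sin ((2+β+τ)*θ + θ₀) + Real.sin θ ^ α))) r
        + r⁻¹ * deriv (fun s : ℝ =>
          s ^ (-2-β) * (K * Real.sin ((2+β+τ)*θ + θ₀) + Real.sin θ ^ α)) r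
        + (r⁻¹)^2 * deriv (deriv (fun t : ℝ =>
          r ^ (-2-β) * (K * Real.sin ((2+β+τ)*t + θ₀) + Real.sin t ^ α))) θ
      ≤ -c * r ^ (-4-β) * Real.sin θ ^ (-2+α)) :=
  enhanced_decay_barrier_general α β ω₀ τ θ₀ hα hβ hτ hθ₀ hsum
end
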